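/- arXiv:1504.03348 — 2 statements merged into one kernel-verified Lean document; each statement's English description precedes it below -/
import Mathlib

section
/- In the diagonal construction on a quantaloid, the composite of diagonals is well-defined: if d : u ⇝ v and e : v ⇝ w are diagonals (i.e. (d ⧏ u) ∘ u = d = v ∘ (v ⧐ d) and similarly for e), then e ⋄ d := (e ⧏ v) ∘ d is again a diagonal from u to w, i.e. ((e⋄d) ⧏ u) ∘ u = e⋄d = w ∘ (w ⧐ (e⋄d)). -/
/-- A (small) quantaloid: a category enriched in complete lattices, with
composition preserving suprema in each variable, and internal homs. -/
structure Quantaloid where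
  Obj : Type
  Hom : Obj → Obj → Type
  lat : ∀ p q, CompleteLattice (Hom p q)
  id : ∀ p, Hom p p
  /-- `comp g f` is `g ∘ f`. -/
  comp : ∀ {p q r}, Hom q r → Hom p q → Hom p r
  id_comp : ∀ {p q} (f : Hom p q), comp (id q) f = f
  comp_id : ∀ {p q} (f : Hom p q), comp f (id p) = f
  assoc : ∀ {p q r s} (h : Hom r s) (g : Hom q r) (f : Hom p q),
    comp (comp h g) f = comp h (comp g f)
  comp_sSup : ∀ {p q r} (g : Hom q r) (S : Set (Hom p q)),
    comp g (sSup S) = sSup (Set.image (comp g) S)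
  sSup_comp : ∀ {p q r} (S : Set (Hom q r)) (f : Hom p q),
    comp (sSup S) f = sSup (Set.image (fun g => comp g f) S)
  /-- left internal hom: `lhom d u = d ⧏ u`. -/
  lhom : ∀ {p q r}, Hom p r → Hom p q → Hom q r
  /-- right internal hom: `rhom v d = v ⧐ d`. -/
  rhom : ∀ {p q r}, Hom q r → Hom p r → Hom p q
  lhom_iff : ∀ {p q r} (z : Hom q r) (d : Hom p r) (u : Hom p q),
    z ≤ lhom d u ↔ comp z u ≤ d
  rhom_iff : ∀ {p q r} (t : Hom p q) (v : Hom q r) (d : Hom p r),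
    t ≤ rhom v d ↔ comp v t ≤ d

attribute [instance] Quantaloid.lat

/-- Transport a hom-arrow along equalities of objects. -/
def Quantaloid.castHom (Q : Quantaloid) {p p' q q' : Q.Obj} (hp : p = p') (hq : q = q')
    (f : Q.Hom p q) : Q.Hom p' q' := by subst hp; subst hq; exact f

/-- A (small) `Q`-category. -/
structure QCategory (Q : Quantaloid) where
  carrier : Type
  ext : carrier → Q.Obj
  hom : ∀ x y : carrier, Q.Hom (ext x) (ext y)
  id_le : ∀ x, Q.id (ext x) ≤ hom x x
  comp_le : ∀ x y z, Q.comp (hom y z) (hom x y) ≤ hom x z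

/-- A `Q`-functor between `Q`-categories. -/
structure QFun (Q : Quantaloid) (X Y : QCategory Q) where
  toFun : X.carrier → Y.carrier
  ext_eq : ∀ x, Y.ext (toFun x) = X.ext x
  hom_le : ∀ x y,
    X.hom x y ≤ Q.castHom (ext_eq x) (ext_eq y) (Y.hom (toFun x) (toFun y))

/-- `d` is a diagonal from `u` to `v`: `(d ⧏ u) ∘ u = d = v ∘ (v ⧐ d)`. -/
def Quantaloid.IsDiagonal (Q : Quantaloid) {A B C D : Q.Obj}
    (u : Q.Hom A B) (v : Q.Hom C D) (d : Q.Hom A D) : Prop :=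
  Q.comp (Q.lhom d u) u = d ∧ Q.comp v (Q.rhom v d) = d

lemma Quantaloid.comp_mono_left (Q : Quantaloid) {p q r : Q.Obj} {g g' : Q.Hom q r}
    (f : Q.Hom p q) (h : g ≤ g') : Q.comp g f ≤ Q.comp g' f := by
  have := Q.sSup_comp {g, g'} f
  rw [sSup_pair, sup_eq_right.mpr h] at this
  rw [this]
  exact le_sSup (Set.mem_image_of_mem _ (by simp))

lemma Quantaloid.comp_mono_right (Q : Quantaloid) {p q r : Q.Obj} (g : Q.Hom q r)
    {f f' : Q.Hom p q} (h : f ≤ f') : Q.comp g f ≤ Q.comp g f' := by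
  have := Q.comp_sSup g {f, f'}
  rw [sSup_pair, sup_eq_right.mpr h] at this
  rw [this]
  exact le_sSup (Set.mem_image_of_mem _ (by simp))

/-- The composite `e ⋄ d := (e ⧏ v) ∘ d` of diagonals `d : u ⇝ v` and `e : v ⇝ w`
is again a diagonal from `u` to `w`. -/
theorem diagonal_comp_isDiagonal (Q : Quantaloid) {A B C D E F : Q.Obj}
    (u : Q.Hom A B) (v : Q.Hom C D) (w : Q.Hom E F)
    (d : Q.Hom A D) (e : Q.Hom C F)
    (hd : Q.IsDiagonal u v d) (he : Q.IsDiagonal v w e) :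
    Q.IsDiagonal u w (Q.comp (Q.lhom e v) d) := by
  obtain ⟨hd1, hd2⟩ := hd
  obtain ⟨he1, he2⟩ := he
  set c := Q.comp (Q.lhom e v) d with hc
  constructor
  · apply le_antisymm
    · exact (Q.lhom_iff _ _ _).mp le_rfl
    · have h1 : Q.comp (Q.lhom e v) (Q.lhom d u) ≤ Q.lhom c u := by
        rw [Q.lhom_iff, Q.assoc, hd1]
      calc c = Q.comp (Q.comp (Q.lhom e v) (Q.lhom d u)) u := by
              rw [Q.assoc, hd1]
        _ ≤ Q.comp (Q.lhom c u) u := Q.comp_mono_left u h1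
  · have hce : Q.comp e (Q.rhom v d) = c := by
      rw [← he1, Q.assoc, hd2]
    apply le_antisymm
    · exact (Q.rhom_iff _ _ _).mp le_rfl
    · have h2 : Q.comp (Q.rhom w e) (Q.rhom v d) ≤ Q.rhom w c := by
        rw [Q.rhom_iff, ← Q.assoc, he2, hce]
      calc c = Q.comp w (Q.comp (Q.rhom w e) (Q.rhom v d)) := by
              rw [← Q.assoc, he2, hce]
        _ ≤ Q.comp w (Q.rhom w c) := Q.comp_mono_right w h2
end

section
/- In the diagonal construction on a quantaloid, the two candidate composites of diagonals agree: for diagonals d : u ⇝ v and e : v ⇝ w one has (e ⧏ v) ∘ d = e ∘ (v ⧐ d). -/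
/-- The two candidate composites of diagonals agree:
`(e ⧏ v) ∘ d = e ∘ (v ⧐ d)` for diagonals `d : u ⇝ v`, `e : v ⇝ w`. -/
theorem diagonal_comp_eq (Q : Quantaloid) {A B C D E F : Q.Obj}
    (u : Q.Hom A B) (v : Q.Hom C D) (w : Q.Hom E F)
    (d : Q.Hom A D) (e : Q.Hom C F)
    (hd : Q.IsDiagonal u v d) (he : Q.IsDiagonal v w e) :
    Q.comp (Q.lhom e v) d = Q.comp e (Q.rhom v d) := by
  conv_lhs => rw [← hd.2, ← Q.assoc, he.1]
end
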